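/- Let Z be a standard Gaussian vector in ℝ^d and r > 0 be such that P(‖Z‖ ≤ r) ≥ 0.9. Let μ_* be a probability measure on ℝ^d with support S, let f_* be its Gaussian location mixture density, and set D(2r) = {x ∈ ℝ^d : dist(x, S) ≤ 2r}. If f is any Gaussian location mixture density with mixing measure μ and total variation distance TV(f, f_*) ≤ ε, then μ(D(2r)) ≥ 2 - (1+ε)/P(‖Z‖ ≤ r). In particular, if H²(f, f_*) ≤ (1/2)(1 - e^{-1})², then μ(D(2r)) > 0.16. -/

import Mathlib

/-! Write a sample of `f_μ` as `θ + Z` with `θ ∼ μ` and `Z` standard Gaussian, let `A` be the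
closed `r`-neighbourhood of `S` and `p = P(‖Z‖ ≤ r)`. Under `μ⋆` we have `θ ∈ S` almost surely,
so `θ + Z ∈ A` as soon as `‖Z‖ ≤ r`, whence `P⋆(A) ≥ p`. Under `μ`, `θ + Z ∈ A` with
`θ ∉ D(2r)` forces `‖Z‖ > r`, whence `P(A) ≤ m + (1 - p)(1 - m)` with `m = μ(D(2r))`.
As `P⋆(A) - P(A) ≤ ε`, this gives `p (2 - m) ≤ 1 + ε`. For the Hellinger bound, Cauchy–Schwarz
applied to `|f - g| = |√f - √g| (√f + √g)` gives `TV ≤ √H² ≤ 1/2`, and then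
`m ≥ 2 - 1.5 / 0.9 > 0.16`. -/

open MeasureTheory Real

/-- The Gaussian location mixture density with mixing measure `μ` on `ℝ^d`. -/
noncomputable def gaussianMixture {d : ℕ} (μ : Measure (EuclideanSpace ℝ (Fin d)))
    (x : EuclideanSpace ℝ (Fin d)) : ℝ :=
  (2 * π) ^ (-(d : ℝ) / 2) * ∫ θ, Real.exp (-‖x - θ‖ ^ 2 / 2) ∂μ

/-- The squared Hellinger distance between two densities on `ℝ^d`. -/
noncomputable def hellingerSq {d : ℕ} (f g : EuclideanSpace ℝ (Fin d) → ℝ) : ℝ :=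
  ∫ x, (Real.sqrt (f x) - Real.sqrt (g x)) ^ 2

/-- The standard Gaussian measure on `ℝ^d`. -/
noncomputable def stdGaussian (d : ℕ) : Measure (EuclideanSpace ℝ (Fin d)) :=
  volume.withDensity fun x =>
    ENNReal.ofReal ((2 * π) ^ (-(d : ℝ) / 2) * Real.exp (-‖x‖ ^ 2 / 2))

noncomputable def stdGaussianDensity (d : ℕ) (x : EuclideanSpace ℝ (Fin d)) : ℝ :=
  (2 * π) ^ (-(d : ℝ) / 2) * Real.exp (-‖x‖ ^ 2 / 2)

section Gaussian

variable {d : ℕ}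

lemma stdGaussianDensity_nonneg (x : EuclideanSpace ℝ (Fin d)) : 0 ≤ stdGaussianDensity d x := by
  unfold stdGaussianDensity; positivity

lemma stdGaussianDensity_le_const (x : EuclideanSpace ℝ (Fin d)) :
    stdGaussianDensity d x ≤ (2 * π) ^ (-(d : ℝ) / 2) := by
  refine mul_le_of_le_one_right (by positivity) (Real.exp_le_one_iff.2 ?_)
  linarith [sq_nonneg ‖x‖]

@[fun_prop]
lemma continuous_stdGaussianDensity : Continuous (stdGaussianDensity d) := by
  unfold stdGaussianDensity; fun_prop

lemma integral_stdGaussianDensity : ∫ x, stdGaussianDensity d x = 1 := by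
  have h := GaussianFourier.integral_rexp_neg_mul_sq_norm
    (V := EuclideanSpace ℝ (Fin d)) (b := 1 / 2) (by norm_num)
  simp only [finrank_euclideanSpace_fin] at h
  have hexp : ∀ x : EuclideanSpace ℝ (Fin d), -‖x‖ ^ 2 / 2 = -(1 / 2) * ‖x‖ ^ 2 := fun x => by
    ring
  simp_rw [stdGaussianDensity, integral_const_mul, hexp, h, show π / (1 / 2) = 2 * π by ring,
    ← Real.rpow_add (by positivity : (0 : ℝ) < 2 * π)]
  rw [neg_div, neg_add_cancel, Real.rpow_zero]

lemma integrable_stdGaussianDensity : Integrable (stdGaussianDensity d) :=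
  Integrable.of_integral_ne_zero (by simp [integral_stdGaussianDensity])

lemma stdGaussian_eq_withDensity :
    stdGaussian d = volume.withDensity fun x => ENNReal.ofReal (stdGaussianDensity d x) := rfl

instance : IsProbabilityMeasure (stdGaussian d) := by
  refine ⟨?_⟩
  rw [stdGaussian_eq_withDensity, withDensity_apply _ MeasurableSet.univ, Measure.restrict_univ,
    ← ofReal_integral_eq_lintegral_ofReal integrable_stdGaussianDensity
      (.of_forall stdGaussianDensity_nonneg), integral_stdGaussianDensity, ENNReal.ofReal_one]

lemma setLIntegral_stdGaussianDensity_sub (A : Set (EuclideanSpace ℝ (Fin d)))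
    (θ : EuclideanSpace ℝ (Fin d)) :
    ∫⁻ x in A, ENNReal.ofReal (stdGaussianDensity d (x - θ))
      = stdGaussian d ((· + θ) ⁻¹' A) := by
  rw [stdGaussian_eq_withDensity, withDensity_apply',
    ← (measurePreserving_add_right volume θ).setLIntegral_comp_preimage_emb
      (measurableEmbedding_addRight θ)]
  simp only [add_sub_cancel_right]

end Gaussian

section Mixture

variable {d : ℕ} {μ : Measure (EuclideanSpace ℝ (Fin d))}

lemma gaussianMixture_eq_integral (x : EuclideanSpace ℝ (Fin d)) :
    gaussianMixture μ x = ∫ θ, stdGaussianDensity d (x - θ) ∂μ :=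
  (integral_const_mul _ _).symm

lemma gaussianMixture_nonneg (x : EuclideanSpace ℝ (Fin d)) : 0 ≤ gaussianMixture μ x := by
  rw [gaussianMixture_eq_integral]
  exact integral_nonneg fun θ => stdGaussianDensity_nonneg _

lemma measurable_gaussianMixture [SFinite μ] : Measurable (gaussianMixture μ) := by
  simp_rw [funext gaussianMixture_eq_integral]
  exact (Continuous.stronglyMeasurable (f := fun p : _ × _ => stdGaussianDensity d (p.1 - p.2))
    (by fun_prop)).integral_prod_right'.measurable

lemma ofReal_gaussianMixture [IsFiniteMeasure μ] (x : EuclideanSpace ℝ (Fin d)) :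
    ENNReal.ofReal (gaussianMixture μ x)
      = ∫⁻ θ, ENNReal.ofReal (stdGaussianDensity d (x - θ)) ∂μ := by
  have hint : Integrable (fun θ => stdGaussianDensity d (x - θ)) μ :=
    (integrable_const _).mono' (by fun_prop) (.of_forall fun θ => by
      rw [Real.norm_of_nonneg (stdGaussianDensity_nonneg _)]
      exact stdGaussianDensity_le_const _)
  rw [gaussianMixture_eq_integral, ofReal_integral_eq_lintegral_ofReal hint
    (.of_forall fun θ => stdGaussianDensity_nonneg _)]

lemma setLIntegral_gaussianMixture [IsFiniteMeasure μ] (A : Set (EuclideanSpace ℝ (Fin d))) :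
    ∫⁻ x in A, ENNReal.ofReal (gaussianMixture μ x)
      = ∫⁻ θ, stdGaussian d ((· + θ) ⁻¹' A) ∂μ := by
  simp_rw [ofReal_gaussianMixture, ← setLIntegral_stdGaussianDensity_sub]
  exact lintegral_lintegral_swap (Measurable.aemeasurable (by fun_prop))

lemma lintegral_gaussianMixture [IsProbabilityMeasure μ] :
    ∫⁻ x, ENNReal.ofReal (gaussianMixture μ x) = 1 := by
  simpa using setLIntegral_gaussianMixture (μ := μ) Set.univ

lemma integrable_gaussianMixture [IsProbabilityMeasure μ] : Integrable (gaussianMixture μ) := by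
  refine ⟨measurable_gaussianMixture.aestronglyMeasurable, ?_⟩
  rw [hasFiniteIntegral_iff_ofReal (.of_forall gaussianMixture_nonneg), lintegral_gaussianMixture]
  exact ENNReal.one_lt_top

lemma setIntegral_gaussianMixture [IsFiniteMeasure μ] (A : Set (EuclideanSpace ℝ (Fin d))) :
    ∫ x in A, gaussianMixture μ x = (∫⁻ θ, stdGaussian d ((· + θ) ⁻¹' A) ∂μ).toReal := by
  rw [integral_eq_lintegral_of_nonneg_ae (.of_forall gaussianMixture_nonneg)
    measurable_gaussianMixture.aestronglyMeasurable, setLIntegral_gaussianMixture]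

lemma integral_gaussianMixture [IsProbabilityMeasure μ] : ∫ x, gaussianMixture μ x = 1 := by
  simpa using setIntegral_gaussianMixture (μ := μ) Set.univ

end Mixture

section Thickening

variable {G : Type*} [NormedAddCommGroup G] [MeasurableSpace G] {S : Set G} {r s : ℝ}

lemma measure_norm_le_le_lintegral_preimage_add (ν : Measure G) {μ : Measure G}
    [IsProbabilityMeasure μ] (hS : μ Sᶜ = 0) :
    ν {z | ‖z‖ ≤ r} ≤ ∫⁻ θ, ν ((· + θ) ⁻¹' {x | Metric.infDist x S ≤ r}) ∂μ := by
  have hsupp : ∀ᵐ θ ∂μ, θ ∈ S := ae_iff.2 hS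
  calc ν {z | ‖z‖ ≤ r} = ∫⁻ _, ν {z | ‖z‖ ≤ r} ∂μ := by simp
    _ ≤ _ := lintegral_mono_ae <| hsupp.mono fun θ hθ => measure_mono fun z (hz : ‖z‖ ≤ r) => by
      calc Metric.infDist (z + θ) S ≤ dist (z + θ) θ := Metric.infDist_le_dist_of_mem hθ
        _ ≤ r := by rwa [dist_eq_norm, add_sub_cancel_right]

lemma lintegral_preimage_add_le [OpensMeasurableSpace G] (ν : Measure G) [IsProbabilityMeasure ν]
    (μ : Measure G) :
    ∫⁻ θ, ν ((· + θ) ⁻¹' {x | Metric.infDist x S ≤ r}) ∂μ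
      ≤ μ {x | Metric.infDist x S ≤ r + s}
        + ν {z | ‖z‖ ≤ s}ᶜ * μ {x | Metric.infDist x S ≤ r + s}ᶜ := by
  set D := {x | Metric.infDist x S ≤ r + s}
  have hD : MeasurableSet D := measurableSet_le (by fun_prop) measurable_const
  rw [← lintegral_add_compl _ hD, ← setLIntegral_one, ← setLIntegral_const]
  refine add_le_add (setLIntegral_mono measurable_const fun _ _ => prob_le_one)
    (setLIntegral_mono measurable_const fun θ hθ => measure_mono fun z hz => ?_)
  by_contra hzs
  refine hθ ?_
  calc Metric.infDist θ S ≤ Metric.infDist (z + θ) S + dist θ (z + θ) :=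
        Metric.infDist_le_infDist_add_dist
    _ ≤ r + s := by
      rw [dist_comm, dist_eq_norm, add_sub_cancel_right]
      exact add_le_add hz (not_not.1 hzs)

end Thickening

section Densities

variable {α : Type*} [MeasurableSpace α] {ν : Measure α} {f g : α → ℝ}

lemma sub_setIntegral_le_half_integral_abs_sub (hf : Integrable f ν) (hg : Integrable g ν)
    (hf1 : ∫ x, f x ∂ν = 1) (hg1 : ∫ x, g x ∂ν = 1) {A : Set α} (hA : MeasurableSet A) :
    (∫ x in A, g x ∂ν) - ∫ x in A, f x ∂ν ≤ (1 / 2) * ∫ x, |f x - g x| ∂ν := by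
  have hf_split := integral_add_compl hA hf
  have hg_split := integral_add_compl hA hg
  have habs_split : ∫ x in A, |f x - g x| ∂ν + ∫ x in Aᶜ, |f x - g x| ∂ν = ∫ x, |f x - g x| ∂ν :=
    integral_add_compl hA (hf.sub hg).abs
  have hA_le : (∫ x in A, g x ∂ν) - ∫ x in A, f x ∂ν ≤ ∫ x in A, |f x - g x| ∂ν := by
    rw [← integral_sub hg.integrableOn hf.integrableOn]
    exact integral_mono (hg.sub hf).integrableOn (hf.sub hg).abs.integrableOn
      fun x => abs_sub_comm (f x) (g x) ▸ le_abs_self _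
  have hAc_le : (∫ x in Aᶜ, f x ∂ν) - ∫ x in Aᶜ, g x ∂ν ≤ ∫ x in Aᶜ, |f x - g x| ∂ν := by
    rw [← integral_sub hf.integrableOn hg.integrableOn]
    exact integral_mono (hf.sub hg).integrableOn (hf.sub hg).abs.integrableOn
      fun x => le_abs_self _
  linarith

lemma half_integral_abs_sub_le_sqrt_integral_sq_sub_sqrt (hf : Integrable f ν)
    (hg : Integrable g ν) (hf0 : 0 ≤ f) (hg0 : 0 ≤ g)
    (hf1 : ∫ x, f x ∂ν = 1) (hg1 : ∫ x, g x ∂ν = 1) :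
    (1 / 2) * ∫ x, |f x - g x| ∂ν ≤ √(∫ x, (√(f x) - √(g x)) ^ 2 ∂ν) := by
  have hsf : AEStronglyMeasurable (fun x => √(f x)) ν :=
    continuous_sqrt.comp_aestronglyMeasurable hf.aestronglyMeasurable
  have hsg : AEStronglyMeasurable (fun x => √(g x)) ν :=
    continuous_sqrt.comp_aestronglyMeasurable hg.aestronglyMeasurable
  have hfactor : ∀ x, |f x - g x| = |√(f x) - √(g x)| * (√(f x) + √(g x)) := fun x => by
    rw [← abs_of_nonneg (add_nonneg (sqrt_nonneg (f x)) (sqrt_nonneg (g x))), ← abs_mul]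
    congr 1
    linear_combination sq_sqrt (hg0 x) - sq_sqrt (hf0 x)
  have hdiff_sq : ∀ x, (√(f x) - √(g x)) ^ 2 ≤ f x + g x := fun x => by
    nlinarith [sq_sqrt (hf0 x), sq_sqrt (hg0 x), sqrt_nonneg (f x), sqrt_nonneg (g x)]
  have hsum_sq : ∀ x, (√(f x) + √(g x)) ^ 2 ≤ 2 * (f x + g x) := fun x => by
    nlinarith [sq_sqrt (hf0 x), sq_sqrt (hg0 x), sq_nonneg (√(f x) - √(g x))]
  have hdiff_meas : AEStronglyMeasurable (fun x => |√(f x) - √(g x)|) ν := (hsf.sub hsg).norm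
  have hdiff_int : Integrable (fun x => |√(f x) - √(g x)| ^ 2) ν :=
    (hf.add hg).mono' (hdiff_meas.pow 2) (.of_forall fun x => by
      simpa [sq_abs] using hdiff_sq x)
  have hsum_int : Integrable (fun x => (√(f x) + √(g x)) ^ 2) ν :=
    ((hf.add hg).const_mul 2).mono' ((hsf.add hsg).pow 2) (.of_forall fun x => by
      simpa using hsum_sq x)
  have hsum_sq_int : ∫ x, (√(f x) + √(g x)) ^ 2 ∂ν ≤ 4 := by
    calc ∫ x, (√(f x) + √(g x)) ^ 2 ∂ν ≤ ∫ x, 2 * (f x + g x) ∂ν :=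
          integral_mono hsum_int ((hf.add hg).const_mul 2) hsum_sq
      _ = 4 := by rw [integral_const_mul, integral_add hf hg, hf1, hg1]; norm_num
  have holder := integral_mul_le_Lp_mul_Lq_of_nonneg Real.HolderConjugate.two_two
    (.of_forall fun x => abs_nonneg (√(f x) - √(g x)))
    (.of_forall fun x => add_nonneg (sqrt_nonneg (f x)) (sqrt_nonneg (g x)))
    (by rw [ENNReal.ofReal_ofNat]; exact (memLp_two_iff_integrable_sq hdiff_meas).2 hdiff_int)
    (by rw [ENNReal.ofReal_ofNat]; exact (memLp_two_iff_integrable_sq (hsf.add hsg)).2 hsum_int)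
  simp only [Real.rpow_two, sq_abs, ← sqrt_eq_rpow, ← hfactor] at holder
  calc (1 / 2) * ∫ x, |f x - g x| ∂ν
      ≤ (1 / 2) * (√(∫ x, (√(f x) - √(g x)) ^ 2 ∂ν) * √4) := by
        gcongr
        exact holder.trans (by gcongr)
    _ = √(∫ x, (√(f x) - √(g x)) ^ 2 ∂ν) := by
        rw [show (4 : ℝ) = 2 ^ 2 by norm_num, sqrt_sq zero_le_two]; ring

end Densities

lemma two_sub_div_le_mass_of_tv {d : ℕ} {r ε : ℝ} {S : Set (EuclideanSpace ℝ (Fin d))}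
    {μstar μ : Measure (EuclideanSpace ℝ (Fin d))} [IsProbabilityMeasure μstar]
    [IsProbabilityMeasure μ] (hsupp : μstar Sᶜ = 0)
    (hp : 0 < (stdGaussian d).real {z | ‖z‖ ≤ r})
    (hTV : (1 / 2 : ℝ) * ∫ x, |gaussianMixture μ x - gaussianMixture μstar x| ≤ ε) :
    2 - (1 + ε) / (stdGaussian d).real {z | ‖z‖ ≤ r}
      ≤ μ.real {x | Metric.infDist x S ≤ 2 * r} := by
  set p := (stdGaussian d).real {z | ‖z‖ ≤ r}
  set m := μ.real {x | Metric.infDist x S ≤ 2 * r}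
  set A := {x : EuclideanSpace ℝ (Fin d) | Metric.infDist x S ≤ r}
  have hA : MeasurableSet A := measurableSet_le (by fun_prop) measurable_const
  have hD : MeasurableSet {x : EuclideanSpace ℝ (Fin d) | Metric.infDist x S ≤ 2 * r} :=
    measurableSet_le (by fun_prop) measurable_const
  have hball : MeasurableSet {z : EuclideanSpace ℝ (Fin d) | ‖z‖ ≤ r} :=
    measurableSet_le (by fun_prop) measurable_const
  have hstar : p ≤ ∫ x in A, gaussianMixture μstar x := by
    have hfin : ∫⁻ θ, stdGaussian d ((· + θ) ⁻¹' A) ∂μstar ≠ ⊤ :=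
      ((lintegral_mono fun _ => prob_le_one).trans_lt (by simp)).ne
    rw [setIntegral_gaussianMixture]
    exact ENNReal.toReal_mono hfin (measure_norm_le_le_lintegral_preimage_add _ hsupp)
  have hmix : ∫ x in A, gaussianMixture μ x ≤ m + (1 - p) * (1 - m) := by
    have hsplit := lintegral_preimage_add_le (S := S) (r := r) (s := r) (stdGaussian d) μ
    rw [← two_mul] at hsplit
    rw [setIntegral_gaussianMixture, ← probReal_compl_eq_one_sub hball,
      ← probReal_compl_eq_one_sub hD]
    refine (ENNReal.toReal_mono (by finiteness) hsplit).trans_eq ?_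
    rw [ENNReal.toReal_add (by finiteness) (by finiteness), ENNReal.toReal_mul]
    rfl
  have hmove : (∫ x in A, gaussianMixture μstar x) - ∫ x in A, gaussianMixture μ x ≤ ε :=
    (sub_setIntegral_le_half_integral_abs_sub integrable_gaussianMixture
      integrable_gaussianMixture integral_gaussianMixture integral_gaussianMixture hA).trans hTV
  have : (2 - m) * p ≤ 1 + ε := by nlinarith
  linarith [(le_div_iff₀ hp).2 this]

theorem mixing_measure_mass_lower_bound_general {d : ℕ} (r : ℝ)
    (h9 : (0.9 : ℝ) ≤ (stdGaussian d {z | ‖z‖ ≤ r}).toReal)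
    (S : Set (EuclideanSpace ℝ (Fin d)))
    (μstar : Measure (EuclideanSpace ℝ (Fin d))) [IsProbabilityMeasure μstar]
    (hsupp : μstar Sᶜ = 0)
    (μ : Measure (EuclideanSpace ℝ (Fin d))) [IsProbabilityMeasure μ] :
    (∀ ε : ℝ, 0 ≤ ε →
      (1 / 2 : ℝ) * (∫ x, |gaussianMixture μ x - gaussianMixture μstar x|) ≤ ε →
      2 - (1 + ε) / (stdGaussian d {z | ‖z‖ ≤ r}).toReal
        ≤ (μ {x | Metric.infDist x S ≤ 2 * r}).toReal)
    ∧ (hellingerSq (gaussianMixture μ) (gaussianMixture μstar)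
          ≤ (1 / 2 : ℝ) * (1 - Real.exp (-1)) ^ 2 →
        (0.16 : ℝ) < (μ {x | Metric.infDist x S ≤ 2 * r}).toReal) := by
  have hp : (0 : ℝ) < (stdGaussian d {z | ‖z‖ ≤ r}).toReal := lt_of_lt_of_le (by norm_num) h9
  refine ⟨fun ε _ hTV => two_sub_div_le_mass_of_tv hsupp hp hTV, fun hH => ?_⟩
  set ε := (1 / 2 : ℝ) * ∫ x, |gaussianMixture μ x - gaussianMixture μstar x|
  have hH_le : (1 / 2 : ℝ) * (1 - Real.exp (-1)) ^ 2 ≤ (1 / 2) ^ 2 := by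
    nlinarith [Real.exp_neg_one_gt_d9, Real.exp_le_one_iff.2 (by norm_num : (-1 : ℝ) ≤ 0)]
  have hε : ε ≤ 1 / 2 :=
    (half_integral_abs_sub_le_sqrt_integral_sq_sub_sqrt integrable_gaussianMixture
      integrable_gaussianMixture gaussianMixture_nonneg gaussianMixture_nonneg
      integral_gaussianMixture integral_gaussianMixture).trans
      (Real.sqrt_le_iff.2 ⟨by norm_num, hH.trans hH_le⟩)
  calc (0.16 : ℝ) < 2 - (1 + 1 / 2) / 0.9 := by norm_num
    _ ≤ 2 - (1 + ε) / (stdGaussian d {z | ‖z‖ ≤ r}).toReal := by gcongr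
    _ ≤ _ := two_sub_div_le_mass_of_tv hsupp hp le_rfl

/-- If a Gaussian mixture `f` is close in total variation (resp. squared Hellinger
distance) to `f⋆`, whose mixing measure is supported in `S`, then the mixing measure of
`f` must place mass at least `2 - (1+ε)/P(‖Z‖ ≤ r)` (resp. more than `0.16`) on the
`2r`-fattening of `S`, where `P(‖Z‖ ≤ r) ≥ 0.9` for a standard Gaussian `Z`. -/
theorem mixing_measure_mass_lower_bound {d : ℕ} (r : ℝ) (hr : 0 < r)
    (h9 : (0.9 : ℝ) ≤ (stdGaussian d {z | ‖z‖ ≤ r}).toReal)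
    (S : Set (EuclideanSpace ℝ (Fin d)))
    (μstar : Measure (EuclideanSpace ℝ (Fin d))) [IsProbabilityMeasure μstar]
    (hsupp : μstar Sᶜ = 0)
    (μ : Measure (EuclideanSpace ℝ (Fin d))) [IsProbabilityMeasure μ] :
    (∀ ε : ℝ, 0 ≤ ε →
      (1 / 2 : ℝ) * (∫ x, |gaussianMixture μ x - gaussianMixture μstar x|) ≤ ε →
      2 - (1 + ε) / (stdGaussian d {z | ‖z‖ ≤ r}).toReal
        ≤ (μ {x | Metric.infDist x S ≤ 2 * r}).toReal)
    ∧ (hellingerSq (gaussianMixture μ) (gaussianMixture μstar)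
          ≤ (1 / 2 : ℝ) * (1 - Real.exp (-1)) ^ 2 →
        (0.16 : ℝ) < (μ {x | Metric.infDist x S ≤ 2 * r}).toReal) :=
  mixing_measure_mass_lower_bound_general r h9 S μstar hsupp μ
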